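/- Let G be a graph on k ≥ 1 vertices and G' a graph on k' ≥ 1 vertices, and let G ∧ G' denote their disjoint union (on k + k' vertices). If P(G, n)/C(n, k) → a, P(G', n)/C(n, k') → b, and P(G ∧ G', n)/C(n, k+k') → c as n → ∞, then c ≥ ((k+k')! · k^k · k'^{k'} / (k! · k'! · (k+k')^{k+k'})) · a · b. -/

import Mathlib

open Classical in
/-- Number of `k`-element vertex subsets of `G` whose induced subgraph is isomorphic to `H`,
where `k` is the number of vertices of `H`. -/
noncomputable def inducedCount {α β : Type*} [Fintype α] [Fintype β]
    (H : SimpleGraph α) (G : SimpleGraph β) : ℕ :=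
  (Finset.univ.filter fun S : Finset β =>
    S.card = Fintype.card α ∧ Nonempty ((G.induce (S : Set β)) ≃g H)).card

/-- The maximum of `inducedCount H G` over all graphs `G` on `n` vertices. -/
noncomputable def maxInducedCount {α : Type*} [Fintype α] (H : SimpleGraph α) (n : ℕ) : ℕ :=
  sSup {m | ∃ G : SimpleGraph (Fin n), inducedCount H G = m}

/-!
Put an extremal graph for `G` on `k t` vertices next to an extremal graph for `G'` on `k' t`
vertices. An induced copy of `G` on the first side together with an induced copy of `G'` on the
second is an induced copy of `G ∧ G'`, so `P(G, kt) P(G', k't) ≤ P(G ∧ G', (k+k')t)`. After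
normalising, the binomial coefficients contribute `C(kt, k) C(k't, k') / C((k+k')t, k+k')`, which
tends to the constant of the theorem because `C(rt, r) ~ (rt)^r / r!` as `t → ∞`.
-/

open Filter Asymptotics SimpleGraph

theorem isEquivalent_choose_mul_self {r : ℕ} (hr : 0 < r) :
    (fun t : ℕ => ((r * t).choose r : ℝ)) ~[atTop]
      fun t => ((r * t : ℕ) : ℝ) ^ r / r.factorial :=
  (isEquivalent_choose r).comp_tendsto (tendsto_id.const_mul_atTop' hr)

theorem tendsto_choose_mul_mul_choose_mul_div_choose_mul {k k' : ℕ} (hk : 0 < k) (hk' : 0 < k') :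
    Tendsto (fun t : ℕ => ((k * t).choose k : ℝ) * ((k' * t).choose k' : ℝ) /
        (((k + k') * t).choose (k + k') : ℝ)) atTop
      (nhds (((k + k').factorial : ℝ) * (k : ℝ) ^ k * (k' : ℝ) ^ k' /
        ((k.factorial : ℝ) * (k'.factorial : ℝ) * ((k + k' : ℕ) : ℝ) ^ (k + k')))) := by
  have h := ((isEquivalent_choose_mul_self hk).mul (isEquivalent_choose_mul_self hk')).div
    (isEquivalent_choose_mul_self (add_pos hk hk'))
  refine (h.congr_right ?_).symm.tendsto_nhds tendsto_const_nhds
  filter_upwards [eventually_ne_atTop 0] with t ht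
  have : (t : ℝ) ≠ 0 := by exact_mod_cast ht
  simp only [Pi.div_apply, Pi.mul_apply, Nat.cast_mul, Nat.cast_add, mul_pow, pow_add]
  field_simp

namespace SimpleGraph

variable {V W : Type*} {G : SimpleGraph V} {G' : SimpleGraph W}

noncomputable def Embedding.induceMapIso (f : G ↪g G') (S : Finset V) :
    G.induce (S : Set V) ≃g G'.induce (S.map f.toEmbedding : Set W) where
  toEquiv := (Equiv.Set.image f S f.injective).trans (Equiv.setCongr (Finset.coe_map _ _).symm)
  map_rel_iff' := f.map_adj_iff

def induceDisjSumIso (S : Finset V) (T : Finset W) :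
    (G ⊕g G').induce (S.disjSum T : Set (V ⊕ W)) ≃g
      G.induce (S : Set V) ⊕g G'.induce (T : Set W) where
  toFun
    | ⟨.inl v, h⟩ => .inl ⟨v, by simpa using h⟩
    | ⟨.inr w, h⟩ => .inr ⟨w, by simpa using h⟩
  invFun
    | .inl v => ⟨.inl v, by simp⟩
    | .inr w => ⟨.inr w, by simp⟩
  left_inv := by rintro ⟨v | w, h⟩ <;> rfl
  right_inv := by rintro (v | w) <;> rfl
  map_rel_iff' := by rintro ⟨v | w, hv⟩ ⟨v' | w', hv'⟩ <;> exact Iff.rfl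

end SimpleGraph

section InducedCount

variable {α α' β β' : Type*} [Fintype α] [Fintype α'] [Fintype β] [Fintype β']

theorem inducedCount_le_of_embedding (H : SimpleGraph α) {G₁ : SimpleGraph β}
    {G₂ : SimpleGraph β'} (f : G₁ ↪g G₂) :
    inducedCount H G₁ ≤ inducedCount H G₂ := by
  classical
  refine Finset.card_le_card_of_injOn (·.map f.toEmbedding) ?_ (Finset.map_injective _).injOn
  intro S hS
  simp only [Finset.coe_filter, Finset.mem_univ, true_and, Set.mem_ofPred_eq] at hS ⊢
  obtain ⟨hcard, ⟨e⟩⟩ := hS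
  exact ⟨(Finset.card_map _).trans hcard, ⟨e.comp (f.induceMapIso S).symm⟩⟩

theorem inducedCount_mul_le_inducedCount_sum (H : SimpleGraph α) (H' : SimpleGraph α')
    (G : SimpleGraph β) (G' : SimpleGraph β') :
    inducedCount H G * inducedCount H' G' ≤ inducedCount (H ⊕g H') (G ⊕g G') := by
  classical
  rw [inducedCount, inducedCount, ← Finset.card_product]
  refine Finset.card_le_card_of_injOn (fun P => P.1.disjSum P.2) ?_ ?_
  · rintro ⟨S, T⟩ hST
    simp only [Finset.coe_product, Finset.coe_filter, Finset.mem_univ, true_and, Set.mem_prod,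
      Set.mem_ofPred_eq] at hST ⊢
    obtain ⟨⟨hS, ⟨e⟩⟩, hT, ⟨e'⟩⟩ := hST
    exact ⟨by rw [Finset.card_disjSum, hS, hT, Fintype.card_sum],
      ⟨(e.sumCongr e').comp (induceDisjSumIso S T)⟩⟩
  · rintro ⟨S, T⟩ - ⟨S', T'⟩ - h
    exact Prod.ext (Finset.disjSum_inj.mp h).1 (Finset.disjSum_inj.mp h).2

theorem bddAbove_inducedCount (H : SimpleGraph α) (n : ℕ) :
    BddAbove {m | ∃ G : SimpleGraph (Fin n), inducedCount H G = m} := by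
  classical
  exact (Set.finite_range (inducedCount H : SimpleGraph (Fin n) → ℕ)).bddAbove

theorem inducedCount_le_maxInducedCount (H : SimpleGraph α) {n : ℕ} (G : SimpleGraph (Fin n)) :
    inducedCount H G ≤ maxInducedCount H n :=
  le_csSup (bddAbove_inducedCount H n) ⟨G, rfl⟩

theorem exists_inducedCount_eq_maxInducedCount (H : SimpleGraph α) (n : ℕ) :
    ∃ G : SimpleGraph (Fin n), inducedCount H G = maxInducedCount H n :=
  Nat.sSup_mem ⟨_, Set.mem_range_self ⊥⟩ (bddAbove_inducedCount H n)

theorem maxInducedCount_mul_le (H : SimpleGraph α) (H' : SimpleGraph α') (m n : ℕ) :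
    maxInducedCount H m * maxInducedCount H' n ≤ maxInducedCount (H ⊕g H') (m + n) := by
  obtain ⟨G, hG⟩ := exists_inducedCount_eq_maxInducedCount H m
  obtain ⟨G', hG'⟩ := exists_inducedCount_eq_maxInducedCount H' n
  rw [← hG, ← hG']
  exact (inducedCount_mul_le_inducedCount_sum H H' G G').trans <|
    (inducedCount_le_of_embedding _ (Embedding.map finSumFinEquiv.toEmbedding _)).trans
      (inducedCount_le_maxInducedCount _ _)

theorem maxInducedCount_div_choose_mul_le (H : SimpleGraph α) (H' : SimpleGraph α') (m n : ℕ) :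
    (maxInducedCount H m : ℝ) / (m.choose (Fintype.card α) : ℝ) *
        ((maxInducedCount H' n : ℝ) / (n.choose (Fintype.card α') : ℝ)) *
        ((m.choose (Fintype.card α) : ℝ) * (n.choose (Fintype.card α') : ℝ) /
          ((m + n).choose (Fintype.card α + Fintype.card α') : ℝ)) ≤
      (maxInducedCount (H ⊕g H') (m + n) : ℝ) /
        ((m + n).choose (Fintype.card α + Fintype.card α') : ℝ) := by
  have hmul : (maxInducedCount H m : ℝ) * maxInducedCount H' n ≤
      maxInducedCount (H ⊕g H') (m + n) := mod_cast maxInducedCount_mul_le H H' m n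
  rcases eq_or_ne (m.choose (Fintype.card α) : ℝ) 0 with h₁ | h₁
  · rw [h₁, zero_mul, zero_div, mul_zero]
    positivity
  rcases eq_or_ne (n.choose (Fintype.card α') : ℝ) 0 with h₂ | h₂
  · rw [h₂, mul_zero, zero_div, mul_zero]
    positivity
  calc _ = (maxInducedCount H m : ℝ) * maxInducedCount H' n /
        ((m + n).choose (Fintype.card α + Fintype.card α') : ℝ) := by field_simp
    _ ≤ _ := by gcongr

end InducedCount

/-- Pippenger–Golumbic, Theorem 6, conjunction case. For graphs `G` on
`k ≥ 1` vertices and `G'` on `k' ≥ 1` vertices, if the normalized maximum induced counts of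
`G`, `G'` and their disjoint union `G ∧ G'` converge to `a`, `b`, `c` respectively, then
`c ≥ ((k+k')! k^k k'^{k'} / (k! k'! (k+k')^{k+k'})) · a · b`. -/
theorem inducibility_disjoint_union {α β : Type*} [Fintype α] [Fintype β]
    (G : SimpleGraph α) (G' : SimpleGraph β)
    (hk : 1 ≤ Fintype.card α) (hk' : 1 ≤ Fintype.card β) (a b c : ℝ)
    (ha : Filter.Tendsto
      (fun n : ℕ => (maxInducedCount G n : ℝ) / (n.choose (Fintype.card α) : ℝ))
      Filter.atTop (nhds a))
    (hb : Filter.Tendsto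
      (fun n : ℕ => (maxInducedCount G' n : ℝ) / (n.choose (Fintype.card β) : ℝ))
      Filter.atTop (nhds b))
    (hc : Filter.Tendsto
      (fun n : ℕ => (maxInducedCount (G ⊕g G') n : ℝ) /
        (n.choose (Fintype.card α + Fintype.card β) : ℝ))
      Filter.atTop (nhds c)) :
    ((Fintype.card α + Fintype.card β).factorial : ℝ) *
        (Fintype.card α : ℝ) ^ (Fintype.card α) * (Fintype.card β : ℝ) ^ (Fintype.card β) /
        (((Fintype.card α).factorial : ℝ) * ((Fintype.card β).factorial : ℝ) *
          ((Fintype.card α + Fintype.card β : ℕ) : ℝ) ^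
            (Fintype.card α + Fintype.card β)) * a * b ≤ c := by
  set k := Fintype.card α
  set k' := Fintype.card β
  have hscale {r : ℕ} (hr : 0 < r) : Tendsto (fun t : ℕ => r * t) atTop atTop :=
    tendsto_id.const_mul_atTop' hr
  have hprod := ((ha.comp (hscale hk)).mul (hb.comp (hscale hk'))).mul
    (tendsto_choose_mul_mul_choose_mul_div_choose_mul hk hk')
  refine (le_of_tendsto_of_tendsto hprod (hc.comp (hscale (add_pos hk hk')))
    (Eventually.of_forall fun t => ?_)).trans_eq' (by ring)
  simpa only [Function.comp_apply, add_mul] using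
    maxInducedCount_div_choose_mul_le G G' (k * t) (k' * t)
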